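/- arXiv:0805.0967 — 4 statements merged into one kernel-verified Lean document; each statement's English description precedes it below -/
import Mathlib

section
/- Let f_n : ℝ → [0,∞) be continuous functions and let f : ℝ → [0,∞) be continuous with f(0) = 0 and f(x) → ∞ as x → +∞ and as x → −∞. Assume that 1 is not a local maximum of f and that the Lebesgue measure of {x ∈ ℝ : f(x) = 1} is zero. Set A = {x ∈ ℝ : f(x) < 1} and A_n = {x ∈ ℝ : f_n(x) < 1}. If f_n converges to f uniformly on compacts, then for every natural number k ≥ 1 the Hausdorff distance between the nonempty compact sets (A_n ∩ (−k,k))ᶜ ∩ [−k,k] and (A ∩ (−k,k))ᶜ ∩ [−k,k] converges to 0 as n → ∞ (where Sᶜ denotes the complement of S in ℝ). -/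
open Filter MeasureTheory Metric Set Topology

/-!
Write `S g` for `[a, b]` minus the part of `(a, b)` where `g < c`. A point of `S fₙ` far from
`S f` lies in a compact set on which `f < c`, hence (uniformly) `fₙ < c` there for large `n`,
which is impossible. Conversely, since `c` is not a local maximum value of `f`, every point of
`S f` is close to an endpoint or to a point of `(a, b)` where `f > c`; finitely many of these
cover `S f` up to any given `ε` by compactness, and each of them lies in `S fₙ` for large `n`.
-/

theorem IsCompact.eventually_forall_infDist_lt {ι α : Type*} [PseudoMetricSpace α]
    {l : Filter ι} {K Y : Set α} {S : ι → Set α} {r : ℝ} (hK : IsCompact K)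
    (hY : ∀ x ∈ K, ∃ y ∈ Y, dist x y < r) (hS : ∀ y ∈ Y, ∀ᶠ i in l, y ∈ S i) :
    ∀ᶠ i in l, ∀ x ∈ K, infDist x (S i) < r := by
  have hcover : K ⊆ ⋃ y ∈ Y, ball y r := fun x hx ↦
    let ⟨y, hy, hxy⟩ := hY x hx
    mem_biUnion hy (mem_ball.2 hxy)
  obtain ⟨t, htY, ht, hKt⟩ := hK.elim_finite_subcover_image (fun _ _ ↦ isOpen_ball) hcover
  filter_upwards [ht.eventually_all.2 fun y hy ↦ hS y (htY hy)] with i hi x hx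
  obtain ⟨y, hyt, hxy⟩ := mem_iUnion₂.1 (hKt hx)
  exact (infDist_le_dist_of_mem (hi y hyt)).trans_lt hxy

section TruncatedSuperlevel

variable {ι : Type*} {l : Filter ι} {g f : ℝ → ℝ} {F : ι → ℝ → ℝ} {c a b x r : ℝ}

def truncatedSuperlevel (g : ℝ → ℝ) (c a b : ℝ) : Set ℝ :=
  ({x | g x < c} ∩ Ioo a b)ᶜ ∩ Icc a b

theorem mem_truncatedSuperlevel :
    x ∈ truncatedSuperlevel g c a b ↔ x ∈ Icc a b ∧ (x ∈ Ioo a b → c ≤ g x) := by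
  simp [truncatedSuperlevel, and_comm]

theorem Icc_diff_Ioo_subset_truncatedSuperlevel :
    Icc a b \ Ioo a b ⊆ truncatedSuperlevel g c a b :=
  fun _ hx ↦ mem_truncatedSuperlevel.2 ⟨hx.1, fun h ↦ absurd h hx.2⟩

theorem isCompact_truncatedSuperlevel (hg : Continuous g) :
    IsCompact (truncatedSuperlevel g c a b) :=
  isCompact_Icc.inter_left
    ((isOpen_lt hg continuous_const).inter isOpen_Ioo).isClosed_compl

theorem exists_dist_lt_of_mem_truncatedSuperlevel (hc : ∀ x, f x = c → ¬ IsLocalMax f x)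
    (hx : x ∈ truncatedSuperlevel f c a b) (hr : 0 < r) :
    ∃ y ∈ {y ∈ Ioo a b | c < f y} ∪ (Icc a b \ Ioo a b), dist x y < r := by
  obtain ⟨hxI, hfx⟩ := mem_truncatedSuperlevel.1 hx
  by_cases hxo : x ∈ Ioo a b
  swap
  · exact ⟨x, Or.inr ⟨hxI, hxo⟩, by simpa using hr⟩
  rcases (hfx hxo).lt_or_eq with hlt | heq
  · exact ⟨x, Or.inl ⟨hxo, hlt⟩, by simpa using hr⟩
  have hfreq : ∃ᶠ t in 𝓝 x, c < f t := by
    simpa [IsLocalMax, IsMaxFilter, ← heq] using hc x heq.symm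
  obtain ⟨t, hct, htI, htx⟩ :=
    (hfreq.and_eventually (inter_mem (Ioo_mem_nhds hxo.1 hxo.2) (ball_mem_nhds x hr))).exists
  exact ⟨t, Or.inl ⟨htI, hct⟩, by rwa [dist_comm]⟩

theorem eventually_forall_infDist_truncatedSuperlevel_lt (hf : Continuous f)
    (hF : TendstoUniformlyOn F f l (Icc a b)) (hr : 0 < r) :
    ∀ᶠ i in l, ∀ x ∈ truncatedSuperlevel (F i) c a b,
      infDist x (truncatedSuperlevel f c a b) < r := by
  set B := truncatedSuperlevel f c a b
  set C := Icc a b ∩ {x | r ≤ infDist x B}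
  have hC : IsCompact C :=
    isCompact_Icc.inter_right (isClosed_le continuous_const (continuous_infDist_pt B))
  have hfC : ∀ x ∈ C, f x < c := fun x hx ↦ by
    by_contra! hcx
    have hxB : x ∈ B := mem_truncatedSuperlevel.2 ⟨hx.1, fun _ ↦ hcx⟩
    have hrx : r ≤ infDist x B := hx.2
    linarith [infDist_zero_of_mem hxB]
  obtain ⟨c', hc', hfc'⟩ : ∃ c' < c, ∀ x ∈ C, f x ≤ c' :=
    hC.exists_forall_le' (α := ℝᵒᵈ) hf.continuousOn hfC
  filter_upwards [(hF.mono inter_subset_left).eventually_forall_lt hc' hfc'] with i hi x hx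
  by_contra! hxr
  obtain ⟨hxI, hFx⟩ := mem_truncatedSuperlevel.1 hx
  have hxo : x ∉ Ioo a b := fun hxo ↦ (hFx hxo).not_gt (hi x ⟨hxI, hxr⟩)
  have hxB : x ∈ B := Icc_diff_Ioo_subset_truncatedSuperlevel ⟨hxI, hxo⟩
  linarith [infDist_zero_of_mem hxB]

theorem eventually_forall_infDist_truncatedSuperlevel_lt_of_not_isLocalMax (hf : Continuous f)
    (hc : ∀ x, f x = c → ¬ IsLocalMax f x) (hF : TendstoUniformlyOn F f l (Icc a b))
    (hr : 0 < r) :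
    ∀ᶠ i in l, ∀ x ∈ truncatedSuperlevel f c a b,
      infDist x (truncatedSuperlevel (F i) c a b) < r := by
  refine (isCompact_truncatedSuperlevel hf).eventually_forall_infDist_lt
    (fun x hx ↦ exists_dist_lt_of_mem_truncatedSuperlevel hc hx hr) ?_
  rintro y (⟨hyo, hcy⟩ | hy)
  · filter_upwards [(hF.tendsto_at (Ioo_subset_Icc_self hyo)).eventually (lt_mem_nhds hcy)]
      with i hi
    exact mem_truncatedSuperlevel.2 ⟨Ioo_subset_Icc_self hyo, fun _ ↦ hi.le⟩
  · exact Eventually.of_forall fun _ ↦ Icc_diff_Ioo_subset_truncatedSuperlevel hy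

theorem tendsto_hausdorffDist_truncatedSuperlevel (hf : Continuous f)
    (hc : ∀ x, f x = c → ¬ IsLocalMax f x) (hF : TendstoUniformlyOn F f l (Icc a b)) :
    Tendsto (fun i ↦ hausdorffDist (truncatedSuperlevel (F i) c a b)
      (truncatedSuperlevel f c a b)) l (𝓝 0) := by
  refine tendsto_order.2 ⟨fun r hr ↦ .of_forall fun _ ↦ hr.trans_le hausdorffDist_nonneg,
    fun r hr ↦ ?_⟩
  filter_upwards [eventually_forall_infDist_truncatedSuperlevel_lt hf hF (half_pos hr),
    eventually_forall_infDist_truncatedSuperlevel_lt_of_not_isLocalMax hf hc hF (half_pos hr)]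
    with i h₁ h₂
  exact (hausdorffDist_le_of_infDist (half_pos hr).le (fun x hx ↦ (h₁ x hx).le)
    (fun x hx ↦ (h₂ x hx).le)).trans_lt (half_lt_self hr)

end TruncatedSuperlevel

theorem stmt0_general
    (f : ℝ → ℝ) (fn : ℕ → ℝ → ℝ)
    (hf_cont : Continuous f)
    (hnotmax : ¬ ∃ (s ε : ℝ), 0 < ε ∧ f s = 1 ∧ ∀ t ∈ Icc (s - ε) (s + ε), f t ≤ 1)
    (hunif : ∀ K : Set ℝ, IsCompact K → TendstoUniformlyOn fn f atTop K) :
    ∀ k : ℕ, 1 ≤ k →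
      Tendsto (fun n =>
        hausdorffDist
          (({x : ℝ | fn n x < 1} ∩ Ioo (-(k : ℝ)) k)ᶜ ∩ Icc (-(k : ℝ)) k)
          (({x : ℝ | f x < 1} ∩ Ioo (-(k : ℝ)) k)ᶜ ∩ Icc (-(k : ℝ)) k))
        atTop (nhds 0) := by
  intro k _
  refine tendsto_hausdorffDist_truncatedSuperlevel hf_cont (fun s hs hmax ↦ hnotmax ?_)
    (hunif _ isCompact_Icc)
  obtain ⟨ε, hε, hball⟩ := nhds_basis_closedBall.mem_iff.1 hmax
  exact ⟨s, ε, hε, hs, fun t ht ↦ hs ▸ hball (Real.closedBall_eq_Icc ▸ ht)⟩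

theorem stmt0
    (f : ℝ → ℝ) (fn : ℕ → ℝ → ℝ)
    (hf_cont : Continuous f) (hf_nonneg : ∀ x, 0 ≤ f x)
    (hfn_cont : ∀ n, Continuous (fn n)) (hfn_nonneg : ∀ n x, 0 ≤ fn n x)
    (hf0 : f 0 = 0)
    (htop : Tendsto f atTop atTop) (hbot : Tendsto f atBot atTop)
    (hnotmax : ¬ ∃ (s ε : ℝ), 0 < ε ∧ f s = 1 ∧ ∀ t ∈ Icc (s - ε) (s + ε), f t ≤ 1)
    (hleb : volume {x : ℝ | f x = 1} = 0)
    (hunif : ∀ K : Set ℝ, IsCompact K → TendstoUniformlyOn fn f atTop K) :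
    ∀ k : ℕ, 1 ≤ k →
      Tendsto (fun n =>
        hausdorffDist
          (({x : ℝ | fn n x < 1} ∩ Ioo (-(k : ℝ)) k)ᶜ ∩ Icc (-(k : ℝ)) k)
          (({x : ℝ | f x < 1} ∩ Ioo (-(k : ℝ)) k)ᶜ ∩ Icc (-(k : ℝ)) k))
        atTop (nhds 0) :=
  stmt0_general f fn hf_cont hnotmax hunif
end

section
/- Let f : ℝ → [0,∞) be a continuous function such that the Lebesgue measure of {x ∈ ℝ : f(x) = 1} is zero. Suppose f_n : ℝ → [0,∞) is a sequence of continuous functions that converges to f uniformly on compacts. Then, for every K > 0, the Lebesgue measure of {x ∈ [−K, K] : f_n(x) < 1} converges, as n → ∞, to the Lebesgue measure of {x ∈ [−K, K] : f(x) < 1}. -/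
open Filter MeasureTheory Set Topology

/-! Off the null set `{f = c}`, pointwise convergence `F i x → f x` eventually fixes whether
`F i x < c`, so the indicators of `{x ∈ s | F i x < c}` converge a.e. and dominated convergence
on the finite-measure set `s` gives convergence of the measures. -/

theorem Filter.Tendsto.eventually_lt_const_iff {ι : Type*} {l : Filter ι} {u : ι → ℝ} {a c : ℝ}
    (hu : Tendsto u l (𝓝 a)) (hac : a ≠ c) : ∀ᶠ i in l, u i < c ↔ a < c := by
  rcases hac.lt_or_gt with hlt | hgt
  · filter_upwards [hu.eventually_lt_const hlt] with i hi
    exact iff_of_true hi hlt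
  · filter_upwards [hu.eventually_const_lt hgt] with i hi
    exact iff_of_false hi.not_gt hgt.not_gt

theorem MeasureTheory.tendsto_measure_setOf_lt_of_ae_tendsto {α ι : Type*} [MeasurableSpace α]
    {μ : Measure α} {l : Filter ι} [l.IsCountablyGenerated] {F : ι → α → ℝ} {f : α → ℝ}
    {s : Set α} {c : ℝ} (hs : MeasurableSet s) (hμs : μ s ≠ ⊤) (hF : ∀ i, Measurable (F i))
    (hf : Measurable f) (hlim : ∀ᵐ x ∂μ, Tendsto (fun i => F i x) l (𝓝 (f x)))
    (hc : μ {x | f x = c} = 0) :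
    Tendsto (fun i => μ {x ∈ s | F i x < c}) l (𝓝 (μ {x ∈ s | f x < c})) := by
  have hne : ∀ᵐ x ∂μ, f x ≠ c := measure_eq_zero_iff_ae_notMem.mp hc
  refine tendsto_measure_of_ae_tendsto_indicator l
    (hs.inter (measurableSet_lt hf measurable_const))
    (fun i => hs.inter (measurableSet_lt (hF i) measurable_const)) hs hμs
    (Eventually.of_forall fun _ => inter_subset_left) ?_
  filter_upwards [hlim, hne] with x hx hxc
  filter_upwards [hx.eventually_lt_const_iff hxc] with i hi
  exact and_congr_right' hi

theorem stmt4_general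
    (f : ℝ → ℝ) (fn : ℕ → ℝ → ℝ)
    (hf_cont : Continuous f)
    (hfn_cont : ∀ n, Continuous (fn n))
    (hleb : volume {x : ℝ | f x = 1} = 0)
    (hunif : ∀ K : Set ℝ, IsCompact K → TendstoUniformlyOn fn f atTop K)
    (K : ℝ) :
    Tendsto (fun n => volume {x ∈ Icc (-K) K | fn n x < 1}) atTop
      (nhds (volume {x ∈ Icc (-K) K | f x < 1})) := by
  have hlim : ∀ x, Tendsto (fun n => fn n x) atTop (𝓝 (f x)) := fun x =>
    (hunif {x} isCompact_singleton).tendsto_at (mem_singleton x)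
  exact tendsto_measure_setOf_lt_of_ae_tendsto measurableSet_Icc measure_Icc_lt_top.ne
    (fun n => (hfn_cont n).measurable) hf_cont.measurable (ae_of_all _ hlim) hleb

theorem stmt4
    (f : ℝ → ℝ) (fn : ℕ → ℝ → ℝ)
    (hf_cont : Continuous f) (hf_nonneg : ∀ x, 0 ≤ f x)
    (hfn_cont : ∀ n, Continuous (fn n)) (hfn_nonneg : ∀ n x, 0 ≤ fn n x)
    (hleb : volume {x : ℝ | f x = 1} = 0)
    (hunif : ∀ K : Set ℝ, IsCompact K → TendstoUniformlyOn fn f atTop K)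
    (K : ℝ) (hK : 0 < K) :
    Tendsto (fun n => volume {x ∈ Icc (-K) K | fn n x < 1}) atTop
      (nhds (volume {x ∈ Icc (-K) K | f x < 1})) :=
  stmt4_general f fn hf_cont hfn_cont hleb hunif K
end

section
/- Let f, f_n : [−1,1] → [0,∞) be continuous functions with f_n → f uniformly on [−1,1]. Assume f(0) = 0, the Lebesgue measure of {x ∈ [−1,1] : f(x) = 1} is zero, and there exist no s ∈ [−1,1] and ε > 0 such that f(s) = 1 and f(t) ≤ 1 for all t ∈ [s − ε, s + ε] ∩ [−1,1]. For x ∈ [−1,1] define g(x) = sup{y ∈ [−1, x] : f(y) ≥ 1} if this set is nonempty and g(x) = −1 otherwise; d(x) = inf{y ∈ [x, 1] : f(y) ≥ 1} if this set is nonempty and d(x) = 1 otherwise; and χ(x) = min( x − g(x), d(x) − x ). Define χ_n analogously from f_n. Then sup_{x ∈ [−1,1]} |χ_n(x) − χ(x)| → 0 as n → ∞. -/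
/-! The quantity χ_f(x) is the distance from x to {-1, 1} ∪ {f ≥ 1}, and a distance
function `infDist x ·` moves by at most δ when its set is replaced by one within Hausdorff
distance δ. So it suffices that for large n the sets {f ≥ 1} and {fₙ ≥ 1} lie in each other's
δ-thickenings. By compactness, {f > 1 - η} lies near {f ≥ 1} for small η, and it contains
{fₙ ≥ 1}. Conversely, as f never touches the level 1 from below, every point of {f ≥ 1} is near
{f > 1}, hence by compactness near some {f > 1 + η}, which lies in {fₙ ≥ 1} once |fₙ - f| < η. -/

open Filter MeasureTheory Set Topology Metric

namespace Metric

variable {X : Type*} [PseudoMetricSpace X]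

theorem infDist_union {s t : Set X} (hs : s.Nonempty) (ht : t.Nonempty) (x : X) :
    infDist x (s ∪ t) = min (infDist x s) (infDist x t) := by
  refine le_antisymm (le_min (infDist_le_infDist_of_subset subset_union_left hs)
    (infDist_le_infDist_of_subset subset_union_right ht)) ?_
  refine (le_infDist (hs.mono subset_union_left)).2 fun y hy => ?_
  rcases hy with hy | hy
  · exact (min_le_left _ _).trans (infDist_le_dist_of_mem hy)
  · exact (min_le_right _ _).trans (infDist_le_dist_of_mem hy)

theorem infDist_le_infDist_add_of_subset_thickening {s t : Set X} {δ : ℝ} (hs : s.Nonempty)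
    (hst : s ⊆ thickening δ t) (x : X) : infDist x t ≤ infDist x s + δ := by
  suffices infDist x t - δ ≤ infDist x s by linarith
  refine (le_infDist hs).2 fun y hy => ?_
  obtain ⟨z, hz, hyz⟩ := mem_thickening_iff.1 (hst hy)
  linarith [infDist_le_dist_of_mem (x := x) hz, dist_triangle x y z]

theorem dist_infDist_infDist_le_of_subset_thickening {s t : Set X} {δ : ℝ} (hs : s.Nonempty)
    (ht : t.Nonempty) (hst : s ⊆ thickening δ t) (hts : t ⊆ thickening δ s) (x : X) :
    dist (infDist x s) (infDist x t) ≤ δ := by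
  rw [Real.dist_eq, abs_sub_le_iff]
  constructor <;> linarith [infDist_le_infDist_add_of_subset_thickening hs hst x,
    infDist_le_infDist_add_of_subset_thickening ht hts x]

theorem insert_subset_thickening_insert {s t : Set X} {δ : ℝ} (hδ : 0 < δ)
    (hst : s ⊆ thickening δ t) (a : X) : insert a s ⊆ thickening δ (insert a t) :=
  insert_subset_iff.2 ⟨self_subset_thickening hδ _ (mem_insert a t),
    hst.trans (thickening_subset_of_subset δ (subset_insert a t))⟩

end Metric

section

variable {X : Type*} [PseudoMetricSpace X]

theorem IsCompact.exists_pos_superlevel_subset_thickening {S : Set X} (hS : IsCompact S)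
    {f : X → ℝ} (hf : ContinuousOn f S) (c : ℝ) {δ : ℝ} (hδ : 0 < δ) :
    ∃ η > 0, {x ∈ S | c - η < f x} ⊆ thickening δ {x ∈ S | c ≤ f x} := by
  set C := S \ thickening δ {x ∈ S | c ≤ f x}
  have hC : ∀ x ∈ C, -c < -f x := fun x hx => by
    by_contra! h
    exact hx.2 (self_subset_thickening hδ _ ⟨hx.1, by linarith⟩)
  obtain ⟨a, hca, ha⟩ :=
    (hS.diff isOpen_thickening).exists_forall_le' (hf.neg.mono sdiff_subset) hC
  refine ⟨c + a, by linarith, fun x ⟨hxS, hx⟩ => ?_⟩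
  by_contra h
  have : a ≤ -f x := ha x ⟨hxS, h⟩
  linarith

theorem IsCompact.exists_pos_subset_thickening_superlevel {K S : Set X} (hK : IsCompact K)
    {f : X → ℝ} {c δ : ℝ} (hKS : K ⊆ thickening δ {x ∈ S | c < f x}) :
    ∃ η > 0, K ⊆ thickening δ {x ∈ S | c + η < f x} := by
  set U : ℕ → Set X := fun n => thickening δ {x ∈ S | c + 1 / (n + 1) < f x}
  have hU : Monotone U := fun m n hmn =>
    thickening_subset_of_subset δ fun x ⟨hxS, hx⟩ =>
      ⟨hxS, (add_le_add_right (Nat.one_div_le_one_div hmn) c).trans_lt hx⟩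
  have hcover : K ⊆ ⋃ n, U n := fun y hy => by
    obtain ⟨z, ⟨hzS, hz⟩, hyz⟩ := mem_thickening_iff.1 (hKS hy)
    obtain ⟨n, hn⟩ := exists_nat_one_div_lt (sub_pos.2 hz)
    exact mem_iUnion.2 ⟨n, mem_thickening_iff.2 ⟨z, ⟨hzS, by linarith⟩, hyz⟩⟩
  obtain ⟨n, hn⟩ := hK.elim_directed_cover U (fun _ => isOpen_thickening) hcover hU.directed_le
  exact ⟨1 / (n + 1), Nat.one_div_pos_of_nat, hn⟩

end

theorem sub_csSup_eq_infDist {s : Set ℝ} {x : ℝ} (hs : s.Nonempty) (hx : x ∈ upperBounds s) :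
    x - sSup s = infDist x s := by
  refine le_antisymm ((le_infDist hs).2 fun y hy => ?_) ?_
  · rw [Real.dist_eq, abs_of_nonneg (sub_nonneg.2 (hx hy))]
    linarith [le_csSup ⟨x, hx⟩ hy]
  · suffices sSup s ≤ x - infDist x s by linarith
    refine csSup_le hs fun y hy => ?_
    have := infDist_le_dist_of_mem (x := x) hy
    rw [Real.dist_eq, abs_of_nonneg (sub_nonneg.2 (hx hy))] at this
    linarith

theorem csInf_sub_eq_infDist {s : Set ℝ} {x : ℝ} (hs : s.Nonempty) (hx : x ∈ lowerBounds s) :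
    sInf s - x = infDist x s := by
  refine le_antisymm ((le_infDist hs).2 fun y hy => ?_) ?_
  · rw [Real.dist_eq, abs_of_nonpos (sub_nonpos.2 (hx hy))]
    linarith [csInf_le ⟨x, hx⟩ hy]
  · suffices x + infDist x s ≤ sInf s by linarith
    refine le_csInf hs fun y hy => ?_
    have := infDist_le_dist_of_mem (x := x) hy
    rw [Real.dist_eq, abs_of_nonpos (sub_nonpos.2 (hx hy))] at this
    linarith

theorem min_sub_csSup_csInf_sub_eq_infDist {a b x : ℝ} (hx : x ∈ Icc a b) (p : ℝ → Prop) :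
    min (x - sSup ({a} ∪ {y ∈ Icc a x | p y})) (sInf ({b} ∪ {y ∈ Icc x b | p y}) - x) =
      infDist x (insert a (insert b {y ∈ Icc a b | p y})) := by
  rw [sub_csSup_eq_infDist ⟨a, Or.inl rfl⟩ ?_, csInf_sub_eq_infDist ⟨b, Or.inl rfl⟩ ?_,
    ← infDist_union ⟨a, Or.inl rfl⟩ ⟨b, Or.inl rfl⟩]
  · congr 1
    ext y
    simp only [mem_union, mem_singleton_iff, mem_insert_iff, mem_ofPred_eq, mem_Icc]
    grind
  · rintro y (rfl | ⟨⟨h, -⟩, -⟩)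
    exacts [hx.2, h]
  · rintro y (rfl | ⟨⟨-, h⟩, -⟩)
    exacts [hx.1, h]

theorem superlevel_subset_thickening_strictSuperlevel {f : ℝ → ℝ}
    (hnomax : ¬ ∃ (s ε : ℝ), s ∈ Icc (-1 : ℝ) 1 ∧ 0 < ε ∧ f s = 1 ∧
      ∀ t ∈ Icc (s - ε) (s + ε) ∩ Icc (-1 : ℝ) 1, f t ≤ 1) {δ : ℝ} (hδ : 0 < δ) :
    {x ∈ Icc (-1 : ℝ) 1 | 1 ≤ f x} ⊆ thickening δ {x ∈ Icc (-1 : ℝ) 1 | 1 < f x} := by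
  rintro s ⟨hs, hfs⟩
  rcases hfs.lt_or_eq with hfs | hfs
  · exact self_subset_thickening hδ _ ⟨hs, hfs⟩
  · push Not at hnomax
    obtain ⟨t, ⟨hst, ht⟩, hft⟩ := hnomax s (δ / 2) hs (half_pos hδ) hfs.symm
    refine mem_thickening_iff.2 ⟨t, ⟨ht, hft⟩, ?_⟩
    rw [Real.dist_eq, abs_sub_lt_iff]
    constructor <;> linarith [hst.1, hst.2]

theorem stmt5_general
    (f : ℝ → ℝ) (fn : ℕ → ℝ → ℝ)
    (hf_cont : ContinuousOn f (Icc (-1) 1))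
    (hunif : TendstoUniformlyOn fn f atTop (Icc (-1) 1))
    (hnomax : ¬ ∃ (s ε : ℝ), s ∈ Icc (-1 : ℝ) 1 ∧ 0 < ε ∧ f s = 1 ∧
      ∀ t ∈ Icc (s - ε) (s + ε) ∩ Icc (-1 : ℝ) 1, f t ≤ 1) :
    TendstoUniformlyOn
      (fun n x => min (x - sSup ({-1} ∪ {y ∈ Icc (-1 : ℝ) x | 1 ≤ fn n y}))
                      (sInf ({1} ∪ {y ∈ Icc x (1 : ℝ) | 1 ≤ fn n y}) - x))
      (fun x => min (x - sSup ({-1} ∪ {y ∈ Icc (-1 : ℝ) x | 1 ≤ f y}))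
                    (sInf ({1} ∪ {y ∈ Icc x (1 : ℝ) | 1 ≤ f y}) - x))
      atTop (Icc (-1) 1) := by
  rw [Metric.tendstoUniformlyOn_iff]
  intro ε hε
  set K := {y ∈ Icc (-1 : ℝ) 1 | 1 ≤ f y}
  have hK : IsCompact K := isCompact_Icc.of_isClosed_subset
    (hf_cont.preimage_isClosed_of_isClosed isClosed_Icc isClosed_Ici) (sep_subset _ _)
  obtain ⟨η₁, hη₁, hK_near⟩ := hK.exists_pos_subset_thickening_superlevel
    (superlevel_subset_thickening_strictSuperlevel hnomax (half_pos hε))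
  obtain ⟨η₂, hη₂, hnear_K⟩ :=
    isCompact_Icc.exists_pos_superlevel_subset_thickening hf_cont 1 (half_pos hε)
  filter_upwards [Metric.tendstoUniformlyOn_iff.1 hunif _ (lt_min hη₁ hη₂)] with n hn x hx
  set Kn := {y ∈ Icc (-1 : ℝ) 1 | 1 ≤ fn n y}
  have hKKn : K ⊆ thickening (ε / 2) Kn :=
    hK_near.trans <| thickening_subset_of_subset _ fun y ⟨hy, hfy⟩ =>
      ⟨hy, by linarith [abs_sub_lt_iff.1 (hn y hy), min_le_left η₁ η₂]⟩
  have hKnK : Kn ⊆ thickening (ε / 2) K := fun y ⟨hy, hfy⟩ =>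
    hnear_K ⟨hy, by linarith [abs_sub_lt_iff.1 (hn y hy), min_le_right η₁ η₂]⟩
  rw [min_sub_csSup_csInf_sub_eq_infDist hx, min_sub_csSup_csInf_sub_eq_infDist hx]
  have hins {A B : Set ℝ} (h : A ⊆ thickening (ε / 2) B) :
      insert (-1) (insert 1 A) ⊆ thickening (ε / 2) (insert (-1) (insert 1 B)) :=
    insert_subset_thickening_insert (half_pos hε)
      (insert_subset_thickening_insert (half_pos hε) h _) _
  exact (dist_infDist_infDist_le_of_subset_thickening (insert_nonempty _ _)
    (insert_nonempty _ _) (hins hKKn) (hins hKnK) x).trans_lt (half_lt_self hε)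

theorem stmt5
    (f : ℝ → ℝ) (fn : ℕ → ℝ → ℝ)
    (hf_cont : ContinuousOn f (Icc (-1) 1))
    (hf_nonneg : ∀ x ∈ Icc (-1 : ℝ) 1, 0 ≤ f x)
    (hfn_cont : ∀ n, ContinuousOn (fn n) (Icc (-1) 1))
    (hfn_nonneg : ∀ n, ∀ x ∈ Icc (-1 : ℝ) 1, 0 ≤ fn n x)
    (hunif : TendstoUniformlyOn fn f atTop (Icc (-1) 1))
    (hf0 : f 0 = 0)
    (hleb : volume {x ∈ Icc (-1 : ℝ) 1 | f x = 1} = 0)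
    (hnomax : ¬ ∃ (s ε : ℝ), s ∈ Icc (-1 : ℝ) 1 ∧ 0 < ε ∧ f s = 1 ∧
      ∀ t ∈ Icc (s - ε) (s + ε) ∩ Icc (-1 : ℝ) 1, f t ≤ 1) :
    TendstoUniformlyOn
      (fun n x => min (x - sSup ({-1} ∪ {y ∈ Icc (-1 : ℝ) x | 1 ≤ fn n y}))
                      (sInf ({1} ∪ {y ∈ Icc x (1 : ℝ) | 1 ≤ fn n y}) - x))
      (fun x => min (x - sSup ({-1} ∪ {y ∈ Icc (-1 : ℝ) x | 1 ≤ f y}))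
                    (sInf ({1} ∪ {y ∈ Icc x (1 : ℝ) | 1 ≤ f y}) - x))
      atTop (Icc (-1) 1) :=
  stmt5_general f fn hf_cont hunif hnomax
end

section
/- Let f : [−1,1] → [0,∞) be continuous and suppose the Lebesgue measure of {x ∈ [−1,1] : f(x) = 1} is zero. For δ > 0 define E↑_δ = { x ∈ (−1,1) : there exists an open interval (a,b) ⊆ (−1,1) with x ∈ (a,b), b − a > δ, and f(y) > 1 for all y ∈ (a,b) }, and E↓_δ = { x ∈ (−1,1) : there exists an open interval (a,b) ⊆ (−1,1) with x ∈ (a,b), b − a > δ, and f(y) < 1 for all y ∈ (a,b) }. Then for every ε > 0 there exists δ > 0 such that the Lebesgue measure of E↑_δ ∪ E↓_δ is strictly greater than 2 − ε. -/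
/-!
The points of an open set `s ⊆ ℝ` that lie in an open subinterval of `s` of length `> 1/(n+1)`
increase with `n` to all of `s`, so by continuity of measure from below their measure tends to
that of `s`. Apply this to the open sets `{f > 1}` and `{f < 1}` inside `(-1, 1)`: their union is
`(-1, 1)` up to the null set `{f = 1}`, hence has measure `2`.
-/

open MeasureTheory Set

def longIntervalPart (s : Set ℝ) (δ : ℝ) : Set ℝ :=
  {x | ∃ a b : ℝ, Ioo a b ⊆ s ∧ x ∈ Ioo a b ∧ δ < b - a}

theorem longIntervalPart_antitone (s : Set ℝ) : Antitone (longIntervalPart s) :=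
  fun _ _ hδ _ ⟨a, b, hs, hx, hlen⟩ => ⟨a, b, hs, hx, hδ.trans_lt hlen⟩

theorem iUnion_longIntervalPart_one_div {s : Set ℝ} (hs : IsOpen s) :
    ⋃ n : ℕ, longIntervalPart s (1 / (n + 1)) = s := by
  refine Subset.antisymm (iUnion_subset fun n x ⟨a, b, has, hx, _⟩ => has hx) fun x hx => ?_
  obtain ⟨a, b, hx, has⟩ := mem_nhds_iff_exists_Ioo_subset.mp (hs.mem_nhds hx)
  obtain ⟨n, hn⟩ := exists_nat_one_div_lt (sub_pos.mpr (hx.1.trans hx.2))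
  exact mem_iUnion.mpr ⟨n, a, b, has, hx, hn⟩

theorem exists_lt_volume_longIntervalPart_union {s t : Set ℝ} (hs : IsOpen s) (ht : IsOpen t)
    {r : ENNReal} (hr : r < volume (s ∪ t)) :
    ∃ δ > 0, r < volume (longIntervalPart s δ ∪ longIntervalPart t δ) := by
  have hmono : Monotone fun n : ℕ =>
      longIntervalPart s (1 / (n + 1)) ∪ longIntervalPart t (1 / (n + 1)) := by
    have hδ : Antitone fun n : ℕ => (1 : ℝ) / (n + 1) := fun m n hmn =>
      one_div_le_one_div_of_le (by positivity) (by exact_mod_cast Nat.succ_le_succ hmn)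
    exact ((longIntervalPart_antitone s).comp hδ).sup
      ((longIntervalPart_antitone t).comp hδ)
  rw [← iUnion_longIntervalPart_one_div hs, ← iUnion_longIntervalPart_one_div ht,
    ← iUnion_union_distrib, hmono.measure_iUnion] at hr
  obtain ⟨n, hn⟩ := lt_iSup_iff.mp hr
  exact ⟨1 / (n + 1), by positivity, hn⟩

theorem longIntervalPart_inter_preimage (u : Set ℝ) (f : ℝ → ℝ) (t : Set ℝ) (δ : ℝ) :
    longIntervalPart (u ∩ f ⁻¹' t) δ =
      {x | ∃ a b : ℝ, Ioo a b ⊆ u ∧ x ∈ Ioo a b ∧ δ < b - a ∧ ∀ y ∈ Ioo a b, f y ∈ t} := by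
  ext x
  simp only [longIntervalPart, subset_inter_iff, mem_ofPred_eq]
  exact exists₂_congr fun a b => ⟨fun ⟨⟨hu, ht⟩, hx, hlen⟩ => ⟨hu, hx, hlen, ht⟩,
    fun ⟨hu, hx, hlen, ht⟩ => ⟨⟨hu, ht⟩, hx, hlen⟩⟩

theorem stmt10_general
    (f : ℝ → ℝ) (hf_cont : ContinuousOn f (Icc (-1) 1))
    (hleb : volume {x ∈ Icc (-1 : ℝ) 1 | f x = 1} = 0) :
    ∀ ε > (0 : ℝ), ∃ δ > (0 : ℝ),
      volume
        ({x : ℝ | ∃ a b : ℝ, Ioo a b ⊆ Ioo (-1 : ℝ) 1 ∧ x ∈ Ioo a b ∧ δ < b - a ∧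
            ∀ y ∈ Ioo a b, 1 < f y} ∪
         {x : ℝ | ∃ a b : ℝ, Ioo a b ⊆ Ioo (-1 : ℝ) 1 ∧ x ∈ Ioo a b ∧ δ < b - a ∧
            ∀ y ∈ Ioo a b, f y < 1})
        > ENNReal.ofReal (2 - ε) := by
  intro ε hε
  have hf : ContinuousOn f (Ioo (-1) 1) := hf_cont.mono Ioo_subset_Icc_self
  have hne : Ioo (-1) 1 ∩ f ⁻¹' Ioi 1 ∪ Ioo (-1) 1 ∩ f ⁻¹' Iio 1 =
      Ioo (-1 : ℝ) 1 \ {x ∈ Icc (-1 : ℝ) 1 | f x = 1} := by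
    ext x
    simp only [mem_union, mem_inter_iff, mem_preimage, mem_Ioi, mem_Iio, mem_sdiff, mem_ofPred_eq]
    constructor
    · rintro (⟨hx, h⟩ | ⟨hx, h⟩) <;> exact ⟨hx, fun h' => by linarith [h'.2]⟩
    · rintro ⟨hx, h⟩
      rcases lt_or_gt_of_ne fun h' => h ⟨Ioo_subset_Icc_self hx, h'⟩ with h' | h'
      exacts [Or.inr ⟨hx, h'⟩, Or.inl ⟨hx, h'⟩]
  have hvol : ENNReal.ofReal (2 - ε) <
      volume (Ioo (-1) 1 ∩ f ⁻¹' Ioi 1 ∪ Ioo (-1) 1 ∩ f ⁻¹' Iio 1) := by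
    rw [hne, measure_sdiff_null hleb, Real.volume_Ioo]
    exact ENNReal.ofReal_lt_ofReal_iff'.mpr ⟨by linarith, by norm_num⟩
  obtain ⟨δ, hδ, hlt⟩ := exists_lt_volume_longIntervalPart_union
    (hf.isOpen_inter_preimage isOpen_Ioo isOpen_Ioi)
    (hf.isOpen_inter_preimage isOpen_Ioo isOpen_Iio) hvol
  rw [longIntervalPart_inter_preimage, longIntervalPart_inter_preimage] at hlt
  exact ⟨δ, hδ, hlt⟩

theorem stmt10
    (f : ℝ → ℝ) (hf_cont : ContinuousOn f (Icc (-1) 1))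
    (hf_nonneg : ∀ x ∈ Icc (-1 : ℝ) 1, 0 ≤ f x)
    (hleb : volume {x ∈ Icc (-1 : ℝ) 1 | f x = 1} = 0) :
    ∀ ε > (0 : ℝ), ∃ δ > (0 : ℝ),
      volume
        ({x : ℝ | ∃ a b : ℝ, Ioo a b ⊆ Ioo (-1 : ℝ) 1 ∧ x ∈ Ioo a b ∧ δ < b - a ∧
            ∀ y ∈ Ioo a b, 1 < f y} ∪
         {x : ℝ | ∃ a b : ℝ, Ioo a b ⊆ Ioo (-1 : ℝ) 1 ∧ x ∈ Ioo a b ∧ δ < b - a ∧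
            ∀ y ∈ Ioo a b, f y < 1})
        > ENNReal.ofReal (2 - ε) :=
  stmt10_general f hf_cont hleb
end
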